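/- For all positive integers a, b, c, every real m ≥ 2, and all real z₁, z₂ < 1 (so that z₂/(z₂−1) < 1 and (z₂−z₁)/(z₂−1) < 1): H_{a,b,c}(z₂/(z₂−1), (z₂−z₁)/(z₂−1); m) = (1−z₂)^{a+b+c+m/2−2} · H_{b,c,a}(z₁, z₂; m). -/
import Mathlib

open MeasureTheory Set intervalIntegral

/-- The open-ish triangle over which iterated integrals live. -/
def Tri : Set (ℝ × ℝ) := {p | 0 < p.1 ∧ 0 < p.2 ∧ p.1 + p.2 ≤ 1}

/-- The closed triangle. -/
def TriC : Set (ℝ × ℝ) := {p | 0 ≤ p.1 ∧ 0 ≤ p.2 ∧ p.1 + p.2 ≤ 1}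

lemma Tri_meas : MeasurableSet Tri := by
  have : Tri = {p : ℝ × ℝ | 0 < p.1} ∩ ({p : ℝ × ℝ | 0 < p.2} ∩ {p : ℝ × ℝ | p.1 + p.2 ≤ 1}) := rfl
  rw [this]
  exact (measurableSet_lt measurable_const measurable_fst).inter
    ((measurableSet_lt measurable_const measurable_snd).inter
      (measurableSet_le (measurable_fst.add measurable_snd) measurable_const))

lemma TriC_compact : IsCompact TriC := by
  have hclosed : IsClosed TriC := by
    have : TriC = {p : ℝ × ℝ | 0 ≤ p.1} ∩ ({p : ℝ × ℝ | 0 ≤ p.2} ∩ {p : ℝ × ℝ | p.1 + p.2 ≤ 1}) := rfl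
    rw [this]
    exact (isClosed_le continuous_const continuous_fst).inter
      ((isClosed_le continuous_const continuous_snd).inter
        (isClosed_le (continuous_fst.add continuous_snd) continuous_const))
  apply IsCompact.of_isClosed_subset (isCompact_Icc (a := ((0:ℝ), (0:ℝ))) (b := (1, 1))) hclosed
  rintro ⟨x, y⟩ ⟨hx, hy, hxy⟩
  refine ⟨⟨hx, hy⟩, ⟨by dsimp at *; linarith, by dsimp at *; linarith⟩⟩

lemma integrableOn_tri (H : ℝ × ℝ → ℝ) (hc : ContinuousOn H TriC) :
    IntegrableOn H Tri := by
  exact (hc.integrableOn_compact TriC_compact).mono_set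
    (fun p hp => ⟨hp.1.le, hp.2.1.le, hp.2.2⟩)

lemma iter_eq_set (h : ℝ → ℝ → ℝ)
    (hi : IntegrableOn (fun p : ℝ × ℝ => h p.1 p.2) Tri) :
    (∫ t in (0:ℝ)..1, ∫ u in (0:ℝ)..(1 - t), h t u)
      = ∫ p in Tri, h p.1 p.2 := by
  have hind : Integrable (Tri.indicator fun p : ℝ × ℝ => h p.1 p.2) volume :=
    (integrable_indicator_iff Tri_meas).2 hi
  have hprod : Integrable (Function.uncurry fun t u : ℝ =>
      Tri.indicator (fun p : ℝ × ℝ => h p.1 p.2) (t, u)) (volume.prod volume) := by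
    have heq : (Function.uncurry fun t u : ℝ =>
        Tri.indicator (fun p : ℝ × ℝ => h p.1 p.2) (t, u))
        = Tri.indicator fun p : ℝ × ℝ => h p.1 p.2 := by
      funext p; rfl
    rw [heq, ← MeasureTheory.Measure.volume_eq_prod]; exact hind
  have key := MeasureTheory.integral_integral hprod
  have inner_eq : ∀ t : ℝ, (∫ u : ℝ, Tri.indicator (fun p : ℝ × ℝ => h p.1 p.2) (t, u))
      = (Ioc (0:ℝ) 1).indicator (fun t => ∫ u in (0:ℝ)..(1 - t), h t u) t := by
    intro t
    by_cases ht : t ∈ Ioc (0:ℝ) 1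
    · have h1 : ∀ u : ℝ, Tri.indicator (fun p : ℝ × ℝ => h p.1 p.2) (t, u)
          = (Ioc (0:ℝ) (1 - t)).indicator (fun u => h t u) u := by
        intro u
        by_cases hu : u ∈ Ioc (0:ℝ) (1 - t)
        · rw [Set.indicator_of_mem hu, Set.indicator_of_mem]
          exact ⟨ht.1, hu.1, by have := hu.2; linarith⟩
        · rw [Set.indicator_of_notMem hu, Set.indicator_of_notMem]
          intro hmem
          exact hu ⟨hmem.2.1, by have := hmem.2.2; linarith⟩
      rw [Set.indicator_of_mem ht]
      simp_rw [h1]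
      rw [MeasureTheory.integral_indicator measurableSet_Ioc,
        intervalIntegral.integral_of_le (by have := ht.2; linarith : (0:ℝ) ≤ 1 - t)]
    · rw [Set.indicator_of_notMem ht]
      have h0 : ∀ u : ℝ, Tri.indicator (fun p : ℝ × ℝ => h p.1 p.2) (t, u) = 0 := by
        intro u
        apply Set.indicator_of_notMem
        rintro ⟨h1', h2', h3'⟩
        simp only [mem_Ioc, not_and_or, not_lt, not_le] at ht
        rcases ht with ht | ht
        · exact absurd h1' (not_lt.2 ht)
        · dsimp at h1' h2' h3'; linarith
      simp [h0]
  calc (∫ t in (0:ℝ)..1, ∫ u in (0:ℝ)..(1 - t), h t u)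
      = ∫ t in Ioc (0:ℝ) 1, ∫ u in (0:ℝ)..(1 - t), h t u :=
        intervalIntegral.integral_of_le (by norm_num)
    _ = ∫ t : ℝ, (Ioc (0:ℝ) 1).indicator (fun t => ∫ u in (0:ℝ)..(1 - t), h t u) t :=
        (MeasureTheory.integral_indicator measurableSet_Ioc).symm
    _ = ∫ t : ℝ, ∫ u : ℝ, Tri.indicator (fun p : ℝ × ℝ => h p.1 p.2) (t, u) := by
        simp_rw [inner_eq]
    _ = ∫ z : ℝ × ℝ, Tri.indicator (fun p : ℝ × ℝ => h p.1 p.2) (z.1, z.2)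
          ∂(volume.prod volume) := key
    _ = ∫ z : ℝ × ℝ, Tri.indicator (fun p : ℝ × ℝ => h p.1 p.2) z := by
        rw [← MeasureTheory.Measure.volume_eq_prod]
    _ = ∫ p in Tri, h p.1 p.2 := MeasureTheory.integral_indicator Tri_meas

lemma set_swap (H : ℝ × ℝ → ℝ) :
    (∫ p in Tri, H p) = ∫ p in Tri, H p.swap := by
  have hsym : ∀ p : ℝ × ℝ, p.swap ∈ Tri ↔ p ∈ Tri := by
    rintro ⟨x, y⟩
    constructor
    · rintro ⟨h1, h2, h3⟩; exact ⟨h2, h1, by dsimp at *; linarith⟩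
    · rintro ⟨h1, h2, h3⟩; exact ⟨h2, h1, by dsimp at *; linarith⟩
  rw [← MeasureTheory.integral_indicator Tri_meas, ← MeasureTheory.integral_indicator Tri_meas]
  have : (∫ z : ℝ × ℝ, Tri.indicator H z)
      = ∫ z : ℝ × ℝ, Tri.indicator H z ∂(volume.prod volume) := by
    rw [← MeasureTheory.Measure.volume_eq_prod]
  rw [this, ← MeasureTheory.integral_prod_swap (Tri.indicator H)]
  have heq : (fun z : ℝ × ℝ => Tri.indicator H z.swap)
      = Tri.indicator (fun p : ℝ × ℝ => H p.swap) := by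
    funext p
    by_cases hp : p ∈ Tri
    · rw [Set.indicator_of_mem ((hsym p).2 hp), Set.indicator_of_mem hp]
    · rw [Set.indicator_of_notMem (fun h => hp ((hsym p).1 h)),
        Set.indicator_of_notMem hp]
  calc ∫ z : ℝ × ℝ, Tri.indicator H z.swap ∂(volume.prod volume)
      = ∫ z : ℝ × ℝ, Tri.indicator H z.swap := by rw [← MeasureTheory.Measure.volume_eq_prod]
    _ = ∫ z : ℝ × ℝ, Tri.indicator (fun p : ℝ × ℝ => H p.swap) z := by rw [heq]

lemma tri_swap (h : ℝ → ℝ → ℝ)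
    (h1 : IntegrableOn (fun p : ℝ × ℝ => h p.1 p.2) Tri)
    (h2 : IntegrableOn (fun p : ℝ × ℝ => h p.2 p.1) Tri) :
    (∫ t in (0:ℝ)..1, ∫ u in (0:ℝ)..(1 - t), h t u)
      = ∫ t in (0:ℝ)..1, ∫ u in (0:ℝ)..(1 - t), h u t := by
  rw [iter_eq_set h h1, iter_eq_set (fun t u => h u t) h2, set_swap]
  rfl

lemma base_pos {z₁ z₂ x y : ℝ} (hz₁ : z₁ < 1) (hz₂ : z₂ < 1)
    (hx : 0 ≤ x) (hy : 0 ≤ y) (hxy : x + y ≤ 1) : 0 < 1 - z₁ * x - z₂ * y := by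
  rcases eq_or_lt_of_le hx with h | h
  · rcases eq_or_lt_of_le hy with h' | h'
    · rw [← h, ← h']; norm_num
    · nlinarith [mul_pos (sub_pos.2 hz₂) h', mul_nonneg (sub_pos.2 hz₁).le hx]
  · nlinarith [mul_pos (sub_pos.2 hz₁) h, mul_nonneg (sub_pos.2 hz₂).le hy]

/-- The integrand family. -/
noncomputable def Gfun (a b c : ℕ) (e z₁ z₂ : ℝ) (x y : ℝ) : ℝ :=
  (1 - x - y) ^ (b - 1) * x ^ (c - 1) * y ^ (a - 1) * (1 - z₁ * x - z₂ * y) ^ (-e)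

lemma contOn_Gfun (a b c : ℕ) (e z₁ z₂ : ℝ) {α β : ℝ × ℝ → ℝ}
    (hα : Continuous α) (hβ : Continuous β)
    (hpos : ∀ p ∈ TriC, 1 - z₁ * α p - z₂ * β p ≠ 0) :
    ContinuousOn (fun p => Gfun a b c e z₁ z₂ (α p) (β p)) TriC := by
  unfold Gfun
  refine ContinuousOn.mul (ContinuousOn.mul (ContinuousOn.mul ?_ ?_) ?_) ?_
  · exact (((continuous_const.sub hα).sub hβ).continuousOn).pow _
  · exact (hα.continuousOn).pow _
  · exact (hβ.continuousOn).pow _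
  · exact ContinuousOn.rpow_const
      (((continuous_const.sub (continuous_const.mul hα)).sub
        (continuous_const.mul hβ)).continuousOn)
      (fun p hp => Or.inl (hpos p hp))

/-- Two-variable hypergeometric family `H_{a,b,c}(z₁,z₂;m)` from the rearrangement lemma. -/
noncomputable def Habc (a b c : ℕ) (m z₁ z₂ : ℝ) : ℝ :=
  (Real.Gamma ((a : ℝ) + b + c + m / 2 - 2) /
      (Real.Gamma a * Real.Gamma b * Real.Gamma c)) *
    ∫ t in (0:ℝ)..1, ∫ u in (0:ℝ)..(1 - t),
      (1 - t - u) ^ (a - 1) * t ^ (b - 1) * u ^ (c - 1) *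
        (1 - z₁ * t - z₂ * u) ^ (-((a : ℝ) + b + c + m / 2 - 2))

/-- Action of the cyclic transformation on the two-variable family `H_{a,b,c}`. -/
theorem stmt15 (a b c : ℕ) (ha : 0 < a) (hb : 0 < b) (hc : 0 < c)
    (m : ℝ) (hm : 2 ≤ m) (z₁ z₂ : ℝ) (hz₁ : z₁ < 1) (hz₂ : z₂ < 1) :
    Habc a b c m (z₂ / (z₂ - 1)) ((z₂ - z₁) / (z₂ - 1)) =
      (1 - z₂) ^ ((a : ℝ) + b + c + m / 2 - 2) * Habc b c a m z₁ z₂ := by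
  have hz2' : (0:ℝ) < 1 - z₂ := by linarith
  have hz2ne : z₂ - 1 ≠ 0 := sub_ne_zero_of_ne (ne_of_lt hz₂)
  have hz2ne' : (1:ℝ) - z₂ ≠ 0 := ne_of_gt hz2'
  set e : ℝ := (a : ℝ) + b + c + m / 2 - 2 with he_def
  have he' : ((b : ℝ) + c + a + m / 2 - 2) = e := by rw [he_def]; ring
  simp only [Habc, he']
  set G : ℝ → ℝ → ℝ := Gfun a b c e z₁ z₂ with hG_def
  -- identify RHS integrand with G
  have hRHS : ∀ t u : ℝ,
      (1 - t - u) ^ (b - 1) * t ^ (c - 1) * u ^ (a - 1) * (1 - z₁ * t - z₂ * u) ^ (-e)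
        = G t u := fun t u => rfl
  -- Step 1: pointwise rewrite of LHS integrand
  have step1 : (∫ t in (0:ℝ)..1, ∫ u in (0:ℝ)..(1 - t),
      (1 - t - u) ^ (a - 1) * t ^ (b - 1) * u ^ (c - 1) *
        (1 - z₂ / (z₂ - 1) * t - (z₂ - z₁) / (z₂ - 1) * u) ^ (-e))
      = (1 - z₂) ^ e * ∫ t in (0:ℝ)..1, ∫ u in (0:ℝ)..(1 - t), G u (1 - t - u) := by
    rw [← intervalIntegral.integral_const_mul]
    apply intervalIntegral.integral_congr
    intro t ht
    rw [Set.uIcc_of_le (by norm_num : (0:ℝ) ≤ 1)] at ht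
    dsimp only
    rw [← intervalIntegral.integral_const_mul]
    apply intervalIntegral.integral_congr
    intro u hu
    rw [Set.uIcc_of_le (by linarith [ht.2] : (0:ℝ) ≤ 1 - t)] at hu
    dsimp only
    have hu1 : 0 ≤ u := hu.1
    have hu2 : u ≤ 1 - t := hu.2
    have ht1 : 0 ≤ t := ht.1
    have hN : 0 < 1 - z₁ * u - z₂ * (1 - t - u) :=
      base_pos hz₁ hz₂ hu1 (by linarith) (by linarith)
    have hbase : 1 - z₂ / (z₂ - 1) * t - (z₂ - z₁) / (z₂ - 1) * u
        = (1 - z₁ * u - z₂ * (1 - t - u)) / (1 - z₂) := by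
      field_simp
      ring
    rw [hbase, Real.div_rpow hN.le hz2'.le, Real.rpow_neg hz2'.le e, div_inv_eq_mul]
    show _ = (1 - z₂) ^ e * Gfun a b c e z₁ z₂ u (1 - t - u)
    unfold Gfun
    rw [show (1:ℝ) - u - (1 - t - u) = t by ring]
    ring
  -- Step 2: triangle swap
  have hcont1 : ContinuousOn (fun p : ℝ × ℝ => G p.2 (1 - p.1 - p.2)) TriC := by
    rw [hG_def]
    apply contOn_Gfun a b c e z₁ z₂ continuous_snd
      ((continuous_const.sub continuous_fst).sub continuous_snd)
    rintro ⟨x, y⟩ ⟨hx, hy, hxy⟩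
    exact ne_of_gt (base_pos hz₁ hz₂ hy (by dsimp at *; linarith) (by dsimp at *; linarith))
  have hcont2 : ContinuousOn (fun p : ℝ × ℝ => G p.1 (1 - p.2 - p.1)) TriC := by
    rw [hG_def]
    apply contOn_Gfun a b c e z₁ z₂ continuous_fst
      ((continuous_const.sub continuous_snd).sub continuous_fst)
    rintro ⟨x, y⟩ ⟨hx, hy, hxy⟩
    exact ne_of_gt (base_pos hz₁ hz₂ hx (by dsimp at *; linarith) (by dsimp at *; linarith))
  have step2 : (∫ t in (0:ℝ)..1, ∫ u in (0:ℝ)..(1 - t), G u (1 - t - u))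
      = ∫ t in (0:ℝ)..1, ∫ u in (0:ℝ)..(1 - t), G t (1 - u - t) := by
    exact tri_swap (fun x y => G y (1 - x - y))
      (integrableOn_tri _ hcont1) (integrableOn_tri _ hcont2)
  -- Step 3: inner reflection
  have step3 : (∫ t in (0:ℝ)..1, ∫ u in (0:ℝ)..(1 - t), G t (1 - u - t))
      = ∫ t in (0:ℝ)..1, ∫ u in (0:ℝ)..(1 - t), G t u := by
    apply intervalIntegral.integral_congr
    intro t _
    have harg : ∀ u : ℝ, G t (1 - u - t) = G t (1 - t - u) := by
      intro u; rw [show (1:ℝ) - u - t = 1 - t - u by ring]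
    simp_rw [harg]
    have := intervalIntegral.integral_comp_sub_left (a := (0:ℝ)) (b := 1 - t)
      (fun x => G t x) (1 - t)
    simpa using this
  rw [step1, step2, step3]
  simp_rw [hRHS]
  ring
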